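/- Let Γ be a finite simple graph and 𝒢 = {G_v}, 𝒢' = {G'_v} two collections of countable groups indexed by V(Γ) such that |G_v| = |G'_v| (as cardinals, possibly infinite) for every vertex v. Then the graph product kernels are isomorphic: KP_0(Γ,𝒢) ≅ KP_0(Γ,𝒢'). -/

import Mathlib

open Monoid
open scoped commutatorElement

variable {V : Type*} (Γ : SimpleGraph V) (G : V → Type*) [∀ v, Group (G v)]

/-- The defining relators of the graph product: commutators of elements of
vertex groups attached to adjacent vertices. -/
def graphProductRels : Set (Monoid.CoprodI G) :=
  {x | ∃ (u v : V) (g : G u) (h : G v), Γ.Adj u v ∧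
        x = ⁅Monoid.CoprodI.of g, Monoid.CoprodI.of h⁆}

/-- The graph product of the groups `G v` over the graph `Γ`. -/
def GraphProduct : Type _ :=
  Monoid.CoprodI G ⧸ Subgroup.normalClosure (graphProductRels Γ G)

instance : Group (GraphProduct Γ G) :=
  QuotientGroup.Quotient.group _

/-- The canonical map from a vertex group into the graph product. -/
def GraphProduct.of (v : V) : G v →* GraphProduct Γ G :=
  (QuotientGroup.mk' _).comp Monoid.CoprodI.of

/-- The natural projection from the graph product onto the direct product of the
vertex groups. -/
def GraphProduct.proj [DecidableEq V] : GraphProduct Γ G →* ((v : V) → G v) :=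
  QuotientGroup.lift _ (Monoid.CoprodI.lift fun v => MonoidHom.mulSingle G v)
    (Subgroup.normalClosure_le_normal <| by
      rintro x ⟨u, v, g, h, hadj, rfl⟩
      have huv : u ≠ v := hadj.ne
      simp only [SetLike.mem_coe, MonoidHom.mem_ker, map_commutatorElement,
        Monoid.CoprodI.lift_of]
      exact commutatorElement_eq_one_iff_commute.mpr
        (Pi.mulSingle_commute huv g h))

/-- The graph product kernel: the kernel of the natural surjection onto the
direct product of the vertex groups. -/
def GraphProductKernel [DecidableEq V] : Subgroup (GraphProduct Γ G) :=
  MonoidHom.ker (GraphProduct.proj Γ G)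

/-!
Fix an enumeration `v₁, …, vₙ` of the vertices and view `∏ v, G v` as the vertex set of a
2-complex: edges join tuples differing in one coordinate, triangles fill three tuples differing in
the same coordinate, and squares fill the two ways of changing coordinates `u`, `v` with
`Γ.Adj u v`. Killing, in its edge-path group, the edges that change a coordinate `v` of a tuple
trivial after `v` (they join every `d` to `1` along `of (d v₁) ⋯ of (d vₙ)`) gives `EdgeGroup`.
Its presentation only sees the pointed sets `(G v, 1)`, so bijections `G v ≃ G' v` fixing `1`
identify the two sides.

Sending each edge to the loop at `1` through the section `d ↦ of (d v₁) ⋯ of (d vₙ)` of `proj`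
maps `EdgeGroup` onto the kernel. It is injective because the graph product acts on
`(∏ v, G v) × EdgeGroup`: a vertex group element moves the first component by right
multiplication and records the crossed edge in the second.
-/

open Function

variable {G}

theorem Pi.mul_mulSingle {I : Type*} [DecidableEq I] {M : I → Type*} [∀ i, MulOneClass (M i)]
    (d : ∀ i, M i) (i : I) (g : M i) : d * Pi.mulSingle i g = update d i (d i * g) := by
  funext j
  rcases eq_or_ne j i with rfl | h
  · simp
  · simp [h]

theorem Equiv.mem_map_symm_finRange {α : Type*} {n : ℕ} (f : α ≃ Fin n) (a : α) :
    a ∈ (List.finRange n).map f.symm :=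
  List.mem_map.mpr ⟨f a, List.mem_finRange _, f.symm_apply_apply a⟩

theorem Equiv.pairwise_map_symm_finRange {α : Type*} {n : ℕ} (f : α ≃ Fin n) :
    ((List.finRange n).map f.symm).Pairwise (f · < f ·) :=
  List.pairwise_map.mpr <| (List.pairwise_lt_finRange n).imp fun h => by simpa using h

namespace GraphProduct

theorem of_commute {u v : V} (h : Γ.Adj u v) (g : G u) (k : G v) :
    Commute (of Γ G u g) (of Γ G v k) := by
  rw [← commutatorElement_eq_one_iff_commute]
  exact (map_commutatorElement (QuotientGroup.mk' _) _ _).symm.trans <|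
    (QuotientGroup.eq_one_iff _).2 (Subgroup.subset_normalClosure ⟨u, v, g, k, h, rfl⟩)

@[elab_as_elim]
theorem induction_on {C : GraphProduct Γ G → Prop} (x : GraphProduct Γ G) (h_one : C 1)
    (h_of : ∀ v (g : G v), C (of Γ G v g)) (h_mul : ∀ x y, C x → C y → C (x * y)) : C x := by
  obtain ⟨x, rfl⟩ := QuotientGroup.mk'_surjective _ x
  induction x using Monoid.CoprodI.induction_on with
  | one => exact h_one
  | of v g => exact h_of v g
  | mul x y hx hy => rw [map_mul]; exact h_mul _ _ hx hy

def lift {H : Type*} [Group H] (φ : ∀ v, G v →* H)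
    (hφ : ∀ u v, Γ.Adj u v → ∀ (g : G u) (k : G v), Commute (φ u g) (φ v k)) :
    GraphProduct Γ G →* H :=
  QuotientGroup.lift (Subgroup.normalClosure (graphProductRels Γ G)) (Monoid.CoprodI.lift φ) <|
    Subgroup.normalClosure_le_normal <| by
      rintro _ ⟨u, v, g, k, h, rfl⟩
      simpa [map_commutatorElement, commutatorElement_eq_one_iff_commute] using hφ u v h g k

@[simp]
theorem lift_of {H : Type*} [Group H] (φ : ∀ v, G v →* H)
    (hφ : ∀ u v, Γ.Adj u v → ∀ (g : G u) (k : G v), Commute (φ u g) (φ v k))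
    (v : V) (g : G v) :
    lift Γ φ hφ (of Γ G v g) = φ v g :=
  Monoid.CoprodI.lift_of φ g

@[simp]
theorem proj_of [DecidableEq V] (v : V) (g : G v) : proj Γ G (of Γ G v g) = Pi.mulSingle v g :=
  Monoid.CoprodI.lift_of (fun v => MonoidHom.mulSingle G v) g

def listProd (l : List V) (d : ∀ v, G v) : GraphProduct Γ G :=
  (l.map fun v => of Γ G v (d v)).prod

@[simp]
theorem listProd_cons (v : V) (l : List V) (d : ∀ v, G v) :
    listProd Γ (v :: l) d = of Γ G v (d v) * listProd Γ l d :=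
  List.prod_cons

theorem listProd_eq_one {l : List V} {d : ∀ v, G v} (h : ∀ w ∈ l, d w = 1) :
    listProd Γ l d = 1 := by
  induction l with
  | nil => rfl
  | cons v l ih => simp [h v List.mem_cons_self, ih fun w hw => h w (List.mem_cons_of_mem v hw)]

theorem proj_listProd [DecidableEq V] {l : List V} (hl : l.Nodup) (d : ∀ v, G v) :
    proj Γ G (listProd Γ l d) = fun w => if w ∈ l then d w else 1 := by
  induction l with
  | nil => rfl
  | cons v l ih =>
    obtain ⟨hvl, hl'⟩ := List.nodup_cons.mp hl
    funext w
    rcases eq_or_ne w v with rfl | hwv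
    · simp [ih hl', hvl]
    · simp [ih hl', hwv]

theorem listProd_mul_of [DecidableEq V] {α : Type*} [Preorder α] {f : V → α} {l : List V}
    (hl : l.Pairwise (f · < f ·)) {v : V} (hv : v ∈ l) {d : ∀ w, G w}
    (hd : ∀ w, f v < f w → d w = 1) (g : G v) :
    listProd Γ l d * of Γ G v g = listProd Γ l (update d v (d v * g)) := by
  induction l with
  | nil => cases hv
  | cons u l ih =>
    obtain ⟨hu, hl⟩ := List.pairwise_cons.mp hl
    rcases eq_or_ne u v with rfl | huv
    · have htail : ∀ w ∈ l, d w = 1 ∧ w ≠ u := fun w hw =>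
        ⟨hd w (hu w hw), fun h => lt_irrefl (f u) (h ▸ hu w hw)⟩
      rw [listProd_cons, listProd_cons, listProd_eq_one Γ fun w hw => (htail w hw).1,
        listProd_eq_one Γ fun w hw => by rw [update_of_ne (htail w hw).2, (htail w hw).1],
        update_self, map_mul]
      group
    · rw [listProd_cons, listProd_cons, mul_assoc, ih hl (List.mem_of_ne_of_mem huv.symm hv),
        update_of_ne huv]

section OrderedProd

variable {n : ℕ} (f : V ≃ Fin n)

def orderedProd (d : ∀ v, G v) : GraphProduct Γ G :=
  listProd Γ ((List.finRange n).map f.symm) d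

@[simp]
theorem orderedProd_one : orderedProd Γ f (1 : ∀ v, G v) = 1 :=
  listProd_eq_one Γ fun _ _ => rfl

@[simp]
theorem proj_orderedProd [DecidableEq V] (d : ∀ v, G v) : proj Γ G (orderedProd Γ f d) = d := by
  rw [orderedProd, proj_listProd Γ <|
    (f.pairwise_map_symm_finRange).imp fun h => ne_of_apply_ne f h.ne]
  simp [f.mem_map_symm_finRange]

theorem orderedProd_mul_of [DecidableEq V] {v : V} {d : ∀ w, G w}
    (hd : ∀ w, f v < f w → d w = 1) (g : G v) :
    orderedProd Γ f d * of Γ G v g = orderedProd Γ f (update d v (d v * g)) :=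
  listProd_mul_of Γ f.pairwise_map_symm_finRange (f.mem_map_symm_finRange v) hd g

end OrderedProd

end GraphProduct

namespace GraphProductKernel

open GraphProduct

variable [DecidableEq V] {n : ℕ} (f : V ≃ Fin n)

section EdgeGroup

variable (X : V → Type*) [∀ v, One (X v)]

/-- `(d, ⟨v, x⟩)` is the edge from `d` to `update d v x`. -/
abbrev Edge : Type _ := (∀ v, X v) × Σ v, X v

def edgeRels : Set (FreeGroup (Edge X)) :=
  {r | ∃ (d : ∀ v, X v) (v : V) (x y : X v),
    r = .of (d, ⟨v, x⟩) * .of (update d v x, ⟨v, y⟩) * (.of (d, ⟨v, y⟩))⁻¹} ∪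
  {r | ∃ (d : ∀ v, X v) (u v : V) (x : X u) (y : X v), Γ.Adj u v ∧
    r = .of (d, ⟨u, x⟩) * .of (update d u x, ⟨v, y⟩) *
      (.of (d, ⟨v, y⟩) * .of (update d v y, ⟨u, x⟩))⁻¹} ∪
  {r | ∃ (d : ∀ v, X v) (v : V) (x : X v), (∀ w, f v < f w → d w = 1) ∧ r = .of (d, ⟨v, x⟩)}

abbrev EdgeGroup : Type _ := PresentedGroup (edgeRels Γ f X)

variable {X}

def edge (d : ∀ v, X v) (v : V) (x : X v) : EdgeGroup Γ f X := PresentedGroup.of (d, ⟨v, x⟩)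

theorem edge_mul_edge (d : ∀ v, X v) (v : V) (x y : X v) :
    edge Γ f d v x * edge Γ f (update d v x) v y = edge Γ f d v y :=
  PresentedGroup.mk_eq_mk_of_mul_inv_mem (.inl (.inl ⟨d, v, x, y, rfl⟩))

theorem edge_self (d : ∀ v, X v) (v : V) : edge Γ f d v (d v) = 1 := by
  simpa [update_eq_self] using edge_mul_edge Γ f d v (d v) (d v)

theorem edge_mul_edge_comm {u v : V} (h : Γ.Adj u v) (d : ∀ v, X v) (x : X u) (y : X v) :
    edge Γ f d u x * edge Γ f (update d u x) v y =
      edge Γ f d v y * edge Γ f (update d v y) u x :=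
  PresentedGroup.mk_eq_mk_of_mul_inv_mem (.inl (.inr ⟨d, u, v, x, y, h, rfl⟩))

theorem edge_eq_one {d : ∀ v, X v} {v : V} (hd : ∀ w, f v < f w → d w = 1) (x : X v) :
    edge Γ f d v x = 1 :=
  PresentedGroup.one_of_mem (.inr ⟨d, v, x, hd, rfl⟩)

variable {Y : V → Type*} [∀ v, One (Y v)]

def EdgeGroup.map (σ : ∀ v, OneHom (X v) (Y v)) : EdgeGroup Γ f X →* EdgeGroup Γ f Y :=
  PresentedGroup.map (FreeGroup.map fun e => (fun w => σ w (e.1 w), ⟨e.2.1, σ _ e.2.2⟩)) <| by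
    have hσ (d : ∀ v, X v) (v : V) (x : X v) :
        (fun w => σ w (update d v x w)) = update (fun w => σ w (d w)) v (σ v x) :=
      funext (apply_update (fun w => σ w) d v x)
    rintro _ ((⟨d, v, x, y, rfl⟩ | ⟨d, u, v, x, y, h, rfl⟩) | ⟨d, v, x, hd, rfl⟩)
    · exact .inl (.inl ⟨fun w => σ w (d w), v, σ v x, σ v y, by simp [hσ]⟩)
    · exact .inl (.inr ⟨fun w => σ w (d w), u, v, σ u x, σ v y, h, by simp [hσ]⟩)
    · exact .inr ⟨fun w => σ w (d w), v, σ v x, fun w hw => by simp [hd w hw], rfl⟩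

@[simp]
theorem EdgeGroup.map_edge (σ : ∀ v, OneHom (X v) (Y v)) (d : ∀ v, X v) (v : V) (x : X v) :
    EdgeGroup.map Γ f σ (edge Γ f d v x) = edge Γ f (fun w => σ w (d w)) v (σ v x) :=
  rfl

def EdgeGroup.congr (e : ∀ v, X v ≃ Y v) (he : ∀ v, e v 1 = 1) :
    EdgeGroup Γ f X ≃* EdgeGroup Γ f Y :=
  MonoidHom.toMulEquiv (EdgeGroup.map Γ f fun v => ⟨e v, he v⟩)
    (EdgeGroup.map Γ f fun v => ⟨(e v).symm, (e v).symm_apply_eq.mpr (he v).symm⟩)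
    (PresentedGroup.ext fun ⟨d, v, x⟩ => by
      change EdgeGroup.map _ _ _ (EdgeGroup.map _ _ _ (edge Γ f d v x)) = edge Γ f d v x
      simp)
    (PresentedGroup.ext fun ⟨d, v, x⟩ => by
      change EdgeGroup.map _ _ _ (EdgeGroup.map _ _ _ (edge Γ f d v x)) = edge Γ f d v x
      simp)

/-- `p.2` is read as an edge path starting at `p.1`: moving `p.1` to `update p.1 v x` prepends
the edge leading back. -/
def step (v : V) (x : X v) (p : (∀ v, X v) × EdgeGroup Γ f X) : (∀ v, X v) × EdgeGroup Γ f X :=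
  (update p.1 v x, edge Γ f (update p.1 v x) v (p.1 v) * p.2)

@[simp]
theorem step_fst (v : V) (x : X v) (p : (∀ v, X v) × EdgeGroup Γ f X) :
    (step Γ f v x p).1 = update p.1 v x :=
  rfl

theorem step_step (v : V) (x y : X v) (p : (∀ v, X v) × EdgeGroup Γ f X) :
    step Γ f v y (step Γ f v x p) = step Γ f v y p := by
  simp only [step, update_idem, update_self, ← mul_assoc]
  rw [← edge_mul_edge Γ f (update p.1 v y) v x (p.1 v), update_idem]

theorem step_self (v : V) (p : (∀ v, X v) × EdgeGroup Γ f X) : step Γ f v (p.1 v) p = p := by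
  simp [step, edge_self]

theorem step_comm {u v : V} (h : Γ.Adj u v) (x : X u) (y : X v)
    (p : (∀ v, X v) × EdgeGroup Γ f X) :
    step Γ f u x (step Γ f v y p) = step Γ f v y (step Γ f u x p) := by
  obtain ⟨d, q⟩ := p
  have huv := h.ne
  have hu : update (update (update d u x) v y) u (d u) = update d v y := by
    rw [← update_comm huv, update_idem, update_eq_self]
  have hv : update (update (update d u x) v y) v (d v) = update d u x := by
    rw [update_idem, ← update_of_ne huv.symm x d, update_eq_self]
  have square := edge_mul_edge_comm Γ f h (update (update d u x) v y) (d u) (d v)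
  rw [hu, hv] at square
  simp only [step, update_of_ne huv, update_of_ne huv.symm, ← update_comm huv x y d,
    ← mul_assoc, square]

theorem step_of_forall_lt {v : V} {p : (∀ v, X v) × EdgeGroup Γ f X}
    (hp : ∀ w, f v < f w → p.1 w = 1) (x : X v) : step Γ f v x p = (update p.1 v x, p.2) := by
  rw [step, edge_eq_one Γ f fun w hw => ?_, one_mul]
  rw [update_of_ne (fun h => (h ▸ hw).false), hp w hw]

end EdgeGroup

section Kernel

def toGraphProduct : EdgeGroup Γ f G →* GraphProduct Γ G :=
  PresentedGroup.toGroup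
    (f := fun e => orderedProd Γ f e.1 * of Γ G e.2.1 ((e.1 e.2.1)⁻¹ * e.2.2) *
      (orderedProd Γ f (update e.1 e.2.1 e.2.2))⁻¹) <| by
    rintro _ ((⟨d, v, x, y, rfl⟩ | ⟨d, u, v, x, y, h, rfl⟩) | ⟨d, v, x, hd, rfl⟩)
    · simp only [map_mul, map_inv, FreeGroup.lift_apply_of, update_self, update_idem]
      group
    · have hc := (of_commute Γ h ((d u)⁻¹ * x) ((d v)⁻¹ * y)).eq
      simp only [map_mul, map_inv, FreeGroup.lift_apply_of, update_of_ne h.ne,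
        update_of_ne h.ne.symm, update_comm h.ne x y d, mul_inv_eq_one] at hc ⊢
      simp only [mul_assoc, inv_mul_cancel_left] at hc ⊢
      congr 1
      simp only [← mul_assoc] at hc ⊢
      rw [hc]
    · simp only [FreeGroup.lift_apply_of]
      rw [orderedProd_mul_of Γ f hd, mul_inv_cancel_left, mul_inv_cancel]

theorem toGraphProduct_edge (d : ∀ v, G v) (v : V) (x : G v) :
    toGraphProduct Γ f (edge Γ f d v x) =
      orderedProd Γ f d * of Γ G v ((d v)⁻¹ * x) * (orderedProd Γ f (update d v x))⁻¹ :=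
  PresentedGroup.toGroup.of _

theorem range_toGraphProduct_le : (toGraphProduct Γ f).range ≤ GraphProductKernel Γ G := by
  rw [GraphProductKernel, MonoidHom.range_le_ker_iff]
  refine PresentedGroup.ext fun ⟨d, v, x⟩ => ?_
  change proj Γ G (toGraphProduct Γ f (edge Γ f d v x)) = 1
  rw [toGraphProduct_edge, map_mul, map_mul, map_inv, proj_orderedProd, proj_orderedProd,
    proj_of, Pi.mul_mulSingle, mul_inv_cancel_left, mul_inv_cancel]

theorem exists_orderedProd_mul_eq (x : GraphProduct Γ G) (d : ∀ v, G v) :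
    ∃ q, orderedProd Γ f d * x = toGraphProduct Γ f q * orderedProd Γ f (d * proj Γ G x) := by
  induction x using GraphProduct.induction_on generalizing d with
  | h_one => exact ⟨1, by simp⟩
  | h_of v g =>
    refine ⟨edge Γ f d v (d v * g), ?_⟩
    rw [toGraphProduct_edge, proj_of, Pi.mul_mulSingle, inv_mul_cancel_left,
      inv_mul_cancel_right]
  | h_mul x y hx hy =>
    obtain ⟨qx, hqx⟩ := hx d
    obtain ⟨qy, hqy⟩ := hy (d * proj Γ G x)
    refine ⟨qx * qy, ?_⟩
    rw [← mul_assoc, hqx, mul_assoc, hqy, map_mul, map_mul, mul_assoc, mul_assoc]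

theorem range_toGraphProduct : (toGraphProduct Γ f).range = GraphProductKernel Γ G := by
  refine le_antisymm (range_toGraphProduct_le Γ f) fun x hx => ?_
  obtain ⟨q, hq⟩ := exists_orderedProd_mul_eq Γ f x 1
  rw [hx, mul_one, orderedProd_one, one_mul, mul_one] at hq
  exact ⟨q, hq.symm⟩

end Kernel

section Action

def vertexAction (v : V) : G v →* Equiv.Perm ((∀ v, G v) × EdgeGroup Γ f G) :=
  MonoidHom.toHomPerm
    { toFun := fun g p => step Γ f v (p.1 v * g⁻¹) p
      map_one' := funext fun p => by rw [inv_one, mul_one, step_self]; rfl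
      map_mul' := fun g h => funext fun p => by
        change _ = step Γ f v ((step Γ f v (p.1 v * h⁻¹) p).1 v * g⁻¹) (step Γ f v _ p)
        rw [step_fst, update_self, step_step, mul_inv_rev, mul_assoc] }

theorem vertexAction_apply (v : V) (g : G v) (p : (∀ v, G v) × EdgeGroup Γ f G) :
    vertexAction Γ f v g p = step Γ f v (p.1 v * g⁻¹) p :=
  rfl

def action : GraphProduct Γ G →* Equiv.Perm ((∀ v, G v) × EdgeGroup Γ f G) :=
  lift Γ (vertexAction Γ f) fun u v h g k => by
    refine Equiv.ext fun p => ?_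
    simp only [Equiv.Perm.mul_apply, vertexAction_apply, step_fst, update_of_ne h.ne,
      update_of_ne h.ne.symm]
    exact step_comm Γ f h _ _ p

theorem action_of (v : V) (g : G v) (p : (∀ v, G v) × EdgeGroup Γ f G) :
    action Γ f (of Γ G v g) p = step Γ f v (p.1 v * g⁻¹) p :=
  Equiv.congr_fun (lift_of Γ (vertexAction Γ f) _ v g) p

theorem action_orderedProd (d : ∀ v, G v) (r : EdgeGroup Γ f G) :
    action Γ f (orderedProd Γ f d) (d, r) = (1, r) := by
  suffices h : ∀ k ≤ n, ∀ d : ∀ v, G v, (∀ w, k ≤ (f w : ℕ) → d w = 1) →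
      action Γ f (orderedProd Γ f d) (d, r) = (1, r) from
    h n le_rfl d fun w hw => absurd (f w).isLt hw.not_gt
  intro k
  induction k with
  | zero =>
    intro _ d hd
    obtain rfl : d = 1 := funext fun w => hd w (Nat.zero_le _)
    simp
  | succ k ih =>
    intro hk d hd
    set v := f.symm ⟨k, hk⟩
    have hfv : (f v : ℕ) = k := by simp [v]
    have hd' : ∀ w, f v < f w → d w = 1 := fun w hw => hd w (by rw [Fin.lt_def] at hw; omega)
    have hd₁ : ∀ w, k ≤ (f w : ℕ) → update d v 1 w = 1 := fun w hw => by
      rcases eq_or_ne w v with rfl | hwv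
      · exact update_self ..
      · have hwk : (f w : ℕ) ≠ k := fun h => hwv (f.injective (Fin.ext (h.trans hfv.symm)))
        rw [update_of_ne hwv]
        exact hd w (by omega)
    calc action Γ f (orderedProd Γ f d) (d, r)
        = action Γ f (orderedProd Γ f (update d v 1) * of Γ G v (d v)) (d, r) := by
          rw [orderedProd_mul_of Γ f fun w hw => ?_, update_idem, update_self, one_mul,
            update_eq_self]
          rw [update_of_ne (fun h => (h ▸ hw).false), hd' w hw]
      _ = action Γ f (orderedProd Γ f (update d v 1)) (update d v 1, r) := by
          rw [map_mul, Equiv.Perm.mul_apply, action_of, mul_inv_cancel,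
            step_of_forall_lt Γ f hd']
      _ = (1, r) := ih (by omega) _ hd₁

theorem action_toGraphProduct (q r : EdgeGroup Γ f G) :
    action Γ f (toGraphProduct Γ f q) (1, r) = (1, q * r) := by
  induction q using PresentedGroup.induction_on generalizing r with | H q => ?_
  induction q using FreeGroup.induction_on generalizing r with
  | C1 => simp
  | of e =>
    obtain ⟨d, v, x⟩ := e
    change action Γ f (toGraphProduct Γ f (edge Γ f d v x)) (1, r) = (1, edge Γ f d v x * r)
    have hback : (action Γ f (orderedProd Γ f (update d v x)))⁻¹ (1, r) = (update d v x, r) := by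
      rw [Equiv.Perm.inv_def, Equiv.symm_apply_eq, action_orderedProd]
    rw [toGraphProduct_edge, map_mul, map_mul, map_inv, Equiv.Perm.mul_apply,
      Equiv.Perm.mul_apply, hback, action_of]
    simp only [update_self, mul_inv_rev, inv_inv, mul_inv_cancel_left, step, update_idem,
      update_eq_self, action_orderedProd]
  | inv_of e ih =>
    simp only [map_inv, Equiv.Perm.inv_def, Equiv.symm_apply_eq, ih, mul_inv_cancel_left]
  | mul a b iha ihb =>
    rw [map_mul, map_mul, map_mul, Equiv.Perm.mul_apply, ihb, iha, mul_assoc]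

theorem toGraphProduct_injective : Injective (toGraphProduct Γ f (G := G)) := by
  refine (injective_iff_map_eq_one _).mpr fun q hq => ?_
  simpa [hq] using (congrArg Prod.snd (action_toGraphProduct Γ f q 1)).symm

end Action

noncomputable def equivKernel : EdgeGroup Γ f G ≃* GraphProductKernel Γ G :=
  (MonoidHom.ofInjective (toGraphProduct_injective Γ f)).trans
    (MulEquiv.subgroupCongr (range_toGraphProduct Γ f))

end GraphProductKernel

open GraphProductKernel in
theorem graphProductKernel_iso_of_card_eq_general
    {V : Type*} [Finite V] [DecidableEq V] (Γ : SimpleGraph V)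
    (G G' : V → Type*) [∀ v, Group (G v)] [∀ v, Group (G' v)]
    (hcard : ∀ v, Nonempty (G v ≃ G' v)) :
    Nonempty ((GraphProductKernel Γ G) ≃* (GraphProductKernel Γ G')) := by
  classical
  obtain ⟨n, ⟨f⟩⟩ := Finite.exists_equiv_fin V
  let e v : G v ≃ G' v := (hcard v).some.setValue 1 1
  exact ⟨(equivKernel Γ f).symm.trans
    ((EdgeGroup.congr Γ f e fun v => Equiv.setValue_eq ..).trans (equivKernel Γ f))⟩

/-- Let `Γ` be a finite simple graph and `𝒢 = {G v}`, `𝒢' = {G' v}` two collections of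
countable groups with `|G v| = |G' v|` (as cardinals) for every vertex `v`.  Then the
graph product kernels are isomorphic: `KP_0(Γ,𝒢) ≅ KP_0(Γ,𝒢')`. -/
theorem graphProductKernel_iso_of_card_eq
    {V : Type*} [Finite V] [DecidableEq V] (Γ : SimpleGraph V)
    (G G' : V → Type*) [∀ v, Group (G v)] [∀ v, Group (G' v)]
    [∀ v, Countable (G v)] [∀ v, Countable (G' v)]
    (hcard : ∀ v, Nonempty (G v ≃ G' v)) :
    Nonempty ((GraphProductKernel Γ G) ≃* (GraphProductKernel Γ G')) :=
  graphProductKernel_iso_of_card_eq_general Γ G G' hcard
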